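/- Let E be a real normed vector space, Θ ⊆ E a nonempty closed convex set, and f₁, …, f_N : E → ℝ functions each of which is CSN with smoothness β > 0. Let θ₁, …, θ_N ∈ Θ, let ε̂ = (1/N) inf_{θ ∈ Θ} Σ_{n=1}^N f_n(θ), and let Ê ≥ ε̂. Let R > 0 and set η* = 1/(2(β + √(β² + βNÊ/(2R²)))). Define the linearized regret Regret(⟨f_n′(θ_n), ·⟩) := Σ_{n=1}^N f_n′(θ_n)(θ_n) − inf_{θ ∈ Θ} Σ_{n=1}^N f_n′(θ_n)(θ). If Regret(f_n) ≤ Regret(⟨f_n′(θ_n), ·⟩) and Regret(⟨f_n′(θ_n), ·⟩) ≤ R²/η* + (η*/2) Σ_{n=1}^N ‖f_n′(θ_n)‖², then Regret(⟨f_n′(θ_n), ·⟩) ≤ 8βR² + √(8βR²NÊ). -/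

import Mathlib

/-! Non-negativity and `β`-smoothness give the self-bounding inequality `‖f′(x)‖² ≤ 2β f(x)`:
the quadratic upper bound `s ↦ f x + s f′(x) v + β s² ‖v‖² / 2` of `f (x + s v) ≥ 0` has
non-positive discriminant. Summed along the iterates, and combined with
`Σ f_n(θ_n) = Regret + N ε̂ ≤ linRegret + N Ê`, the assumed bound turns into the implicit inequality
`linRegret ≤ R²/η + ηβ (linRegret + N Ê)`, which for the tuned `η*` solves to the claim. -/

open Finset

/-- A differentiable function `f : E → ℝ` is CSN with smoothness `β` if it is convex,
non-negative, and its Fréchet derivative is `β`-Lipschitz in the operator (dual) norm. -/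
def IsCSN {E : Type*} [NormedAddCommGroup E] [NormedSpace ℝ E]
    (f : E → ℝ) (β : ℝ) : Prop :=
  ConvexOn ℝ Set.univ f ∧ (∀ x, 0 ≤ f x) ∧ Differentiable ℝ f ∧
    ∀ x y, ‖fderiv ℝ f x - fderiv ℝ f y‖ ≤ β * ‖x - y‖

/-- `Regret(f_n) = Σ_{n=1}^N f_n(θ_n) − inf_{θ ∈ Θ} Σ_{n=1}^N f_n(θ)`. -/
noncomputable def regret {E : Type*} (Θ : Set E) (N : ℕ)
    (f : ℕ → E → ℝ) (θ : ℕ → E) : ℝ :=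
  (∑ n ∈ Finset.Icc 1 N, f n (θ n))
    - sInf ((fun x => ∑ n ∈ Finset.Icc 1 N, f n x) '' Θ)

/-- `Regret(⟨f_n′(θ_n), ·⟩) = Σ_{n=1}^N f_n′(θ_n)(θ_n) − inf_{θ ∈ Θ} Σ_{n=1}^N f_n′(θ_n)(θ)`. -/
noncomputable def linRegret {E : Type*} [NormedAddCommGroup E] [NormedSpace ℝ E]
    (Θ : Set E) (N : ℕ) (f : ℕ → E → ℝ) (θ : ℕ → E) : ℝ :=
  (∑ n ∈ Finset.Icc 1 N, fderiv ℝ (f n) (θ n) (θ n))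
    - sInf ((fun x => ∑ n ∈ Finset.Icc 1 N, fderiv ℝ (f n) (θ n) x) '' Θ)

theorem image_one_le_of_deriv_sub_le {φ φ' : ℝ → ℝ} {K : ℝ} (hφ : ∀ t, HasDerivAt φ (φ' t) t)
    (hK : ∀ t ∈ Set.Ico (0 : ℝ) 1, φ' t - φ' 0 ≤ K * t) :
    φ 1 ≤ φ 0 + φ' 0 + K / 2 := by
  have hB : ∀ t, HasDerivAt (fun t => φ 0 + t * φ' 0 + K / 2 * t ^ 2) (φ' 0 + K * t) t := by
    intro t
    have := (((hasDerivAt_id' t).mul_const (φ' 0)).const_add (φ 0)).add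
      ((hasDerivAt_pow 2 t).const_mul (K / 2))
    exact this.congr_deriv (by norm_num; ring)
  have := image_le_of_deriv_right_le_deriv_boundary (a := 0) (b := 1)
    (fun t _ => (hφ t).continuousAt.continuousWithinAt) (fun t _ => (hφ t).hasDerivWithinAt)
    (by simp) (fun t _ => (hB t).continuousAt.continuousWithinAt)
    (fun t _ => (hB t).hasDerivWithinAt) (fun t ht => by linarith [hK t ht])
    (Set.right_mem_Icc.2 zero_le_one)
  simpa using this

theorem apply_add_le_of_fderiv_lipschitz {E : Type*} [NormedAddCommGroup E] [NormedSpace ℝ E]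
    {f : E → ℝ} {β : ℝ} (hf : Differentiable ℝ f)
    (hlip : ∀ x y, ‖fderiv ℝ f x - fderiv ℝ f y‖ ≤ β * ‖x - y‖) (x v : E) :
    f (x + v) ≤ f x + fderiv ℝ f x v + β / 2 * ‖v‖ ^ 2 := by
  have hφ : ∀ t : ℝ, HasDerivAt (fun t : ℝ => f (x + t • v)) (fderiv ℝ f (x + t • v) v) t :=
    fun t => (hf _).hasFDerivAt.comp_hasDerivAt t
      (by simpa using ((hasDerivAt_id t).smul_const v).const_add x)
  have hK : ∀ t ∈ Set.Ico (0 : ℝ) 1,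
      fderiv ℝ f (x + t • v) v - fderiv ℝ f (x + (0 : ℝ) • v) v ≤ β * ‖v‖ ^ 2 * t := by
    rintro t ⟨ht, -⟩
    calc fderiv ℝ f (x + t • v) v - fderiv ℝ f (x + (0 : ℝ) • v) v
        = (fderiv ℝ f (x + t • v) - fderiv ℝ f x) v := by simp
      _ ≤ ‖fderiv ℝ f (x + t • v) - fderiv ℝ f x‖ * ‖v‖ :=
        (Real.le_norm_self _).trans (ContinuousLinearMap.le_opNorm _ _)
      _ ≤ β * ‖t • v‖ * ‖v‖ := by gcongr; simpa using hlip (x + t • v) x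
      _ = β * ‖v‖ ^ 2 * t := by rw [norm_smul, Real.norm_of_nonneg ht]; ring
  have := image_one_le_of_deriv_sub_le hφ hK
  simp only [zero_smul, add_zero, one_smul] at this
  linarith

theorem sq_norm_fderiv_le_of_nonneg {E : Type*} [NormedAddCommGroup E] [NormedSpace ℝ E]
    {f : E → ℝ} {β : ℝ} (hβ : 0 ≤ β) (hnn : ∀ x, 0 ≤ f x) (hf : Differentiable ℝ f)
    (hlip : ∀ x y, ‖fderiv ℝ f x - fderiv ℝ f y‖ ≤ β * ‖x - y‖) (x : E) :
    ‖fderiv ℝ f x‖ ^ 2 ≤ 2 * β * f x := by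
  have hv : ∀ v, |fderiv ℝ f x v| ≤ √(2 * β * f x) * ‖v‖ := by
    intro v
    have hquad : ∀ s : ℝ, 0 ≤ β / 2 * ‖v‖ ^ 2 * (s * s) + fderiv ℝ f x v * s + f x := fun s => by
      have := apply_add_le_of_fderiv_lipschitz hf hlip x (s • v)
      rw [map_smul, norm_smul, Real.norm_eq_abs, mul_pow, sq_abs, smul_eq_mul] at this
      nlinarith [hnn (x + s • v)]
    have hdisc := discrim_le_zero hquad
    rw [discrim] at hdisc
    calc |fderiv ℝ f x v| ≤ √(2 * β * f x * ‖v‖ ^ 2) := Real.abs_le_sqrt (by linarith)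
      _ = √(2 * β * f x) * ‖v‖ := by
        rw [Real.sqrt_mul (by have := hnn x; positivity), Real.sqrt_sq (norm_nonneg v)]
  calc ‖fderiv ℝ f x‖ ^ 2 ≤ √(2 * β * f x) ^ 2 := by
        gcongr
        exact ContinuousLinearMap.opNorm_le_bound _ (Real.sqrt_nonneg _) hv
    _ = 2 * β * f x := Real.sq_sqrt (by have := hnn x; positivity)

theorem sum_sq_norm_fderiv_le_of_isCSN {E ι : Type*} [NormedAddCommGroup E] [NormedSpace ℝ E]
    {s : Finset ι} {f : ι → E → ℝ} {β : ℝ} (hβ : 0 ≤ β) (hf : ∀ n ∈ s, IsCSN (f n) β)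
    (θ : ι → E) :
    ∑ n ∈ s, ‖fderiv ℝ (f n) (θ n)‖ ^ 2 ≤ 2 * β * ∑ n ∈ s, f n (θ n) := by
  rw [mul_sum]
  refine sum_le_sum fun n hn => ?_
  obtain ⟨-, hnn, hd, hlip⟩ := hf n hn
  exact sq_norm_fderiv_le_of_nonneg hβ hnn hd hlip (θ n)

theorem le_add_sqrt_of_le_div_add_mul {L A β R η : ℝ} (hA : 0 ≤ A) (hβ : 0 < β) (hR : 0 < R)
    (hη : η = 1 / (2 * (β + √(β ^ 2 + β * A / (2 * R ^ 2)))))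
    (h : L ≤ R ^ 2 / η + η * β * (L + A)) :
    L ≤ 8 * β * R ^ 2 + √(8 * β * R ^ 2 * A) := by
  set c := β * A / (2 * R ^ 2) with hc
  set s := √(β ^ 2 + c)
  set t := √c
  have hc0 : 0 ≤ c := by positivity
  have hs2 : s ^ 2 = β ^ 2 + t ^ 2 := by rw [Real.sq_sqrt hc0, Real.sq_sqrt (by positivity)]
  have hts : t ≤ s := Real.sqrt_le_sqrt (by linarith [sq_nonneg β])
  have hβA : β * A = 2 * R ^ 2 * t ^ 2 := by rw [Real.sq_sqrt hc0, hc]; field_simp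
  have hsqrt : √(8 * β * R ^ 2 * A) = 4 * R ^ 2 * t := by
    rw [show 8 * β * R ^ 2 * A = (4 * R ^ 2) ^ 2 * c by rw [hc]; field_simp; ring,
      Real.sqrt_mul (by positivity), Real.sqrt_sq (by positivity)]
  have hcleared : L * (β + 2 * s) ≤ 4 * R ^ 2 * (β + s) ^ 2 + 2 * R ^ 2 * t ^ 2 := by
    have hD : 0 < β + s := by positivity
    have hηD : η * (2 * (β + s)) = 1 := by rw [hη]; field_simp
    have hRη : R ^ 2 / η = R ^ 2 * (2 * (β + s)) := by rw [hη]; field_simp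
    rw [hRη] at h
    have := mul_le_mul_of_nonneg_right h (by positivity : (0:ℝ) ≤ 2 * (β + s))
    linear_combination this + β * (L + A) * hηD + hβA
  have hs0 : 0 ≤ s := Real.sqrt_nonneg _
  have ht0 : 0 ≤ t := Real.sqrt_nonneg _
  rw [hsqrt]
  refine le_of_mul_le_mul_right (hcleared.trans ?_) (by positivity : 0 < β + 2 * s)
  nlinarith [mul_nonneg ht0 (sub_nonneg.2 hts), mul_nonneg hβ.le hs0, mul_nonneg hβ.le ht0,
    mul_pos hR hR]

theorem bias_dependent_linearized_regret_general
    {E : Type*} [NormedAddCommGroup E] [NormedSpace ℝ E]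
    (Θ : Set E)
    (N : ℕ) (hN : 1 ≤ N)
    (f : ℕ → E → ℝ) (β : ℝ) (hβ : 0 < β)
    (hCSN : ∀ n ∈ Finset.Icc 1 N, IsCSN (f n) β)
    (θ : ℕ → E)
    (εhat Ehat R ηstar : ℝ)
    (hεhat : εhat = (1 / (N : ℝ)) * sInf ((fun x => ∑ n ∈ Finset.Icc 1 N, f n x) '' Θ))
    (hEhat : εhat ≤ Ehat)
    (hR : 0 < R)
    (hη : ηstar = 1 / (2 * (β + Real.sqrt (β ^ 2 + β * N * Ehat / (2 * R ^ 2)))))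
    (hreg1 : regret Θ N f θ ≤ linRegret Θ N f θ)
    (hreg2 : linRegret Θ N f θ ≤ R ^ 2 / ηstar
        + (ηstar / 2) * ∑ n ∈ Finset.Icc 1 N, ‖fderiv ℝ (f n) (θ n)‖ ^ 2) :
    linRegret Θ N f θ ≤ 8 * β * R ^ 2 + Real.sqrt (8 * β * R ^ 2 * N * Ehat) := by
  have hNpos : (0 : ℝ) < N := by exact_mod_cast hN
  have hinf : sInf ((fun x => ∑ n ∈ Icc 1 N, f n x) '' Θ) = N * εhat := by
    rw [hεhat]; field_simp
  have hEhat0 : 0 ≤ Ehat := by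
    refine le_trans (nonneg_of_mul_nonneg_right ?_ hNpos) hEhat
    rw [← hinf]
    exact Real.sInf_nonneg (by
      rintro _ ⟨x, -, rfl⟩; exact sum_nonneg fun n hn => (hCSN n hn).2.1 x)
  have hloss : ∑ n ∈ Icc 1 N, f n (θ n) ≤ linRegret Θ N f θ + N * Ehat := by
    have := mul_le_mul_of_nonneg_left hEhat hNpos.le
    rw [regret, hinf] at hreg1
    linarith
  have hηpos : 0 < ηstar := by rw [hη]; positivity
  have hchain : linRegret Θ N f θ
      ≤ R ^ 2 / ηstar + ηstar * β * (linRegret Θ N f θ + N * Ehat) :=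
    calc linRegret Θ N f θ
        ≤ R ^ 2 / ηstar + ηstar / 2 * ∑ n ∈ Icc 1 N, ‖fderiv ℝ (f n) (θ n)‖ ^ 2 := hreg2
      _ ≤ R ^ 2 / ηstar + ηstar / 2 * (2 * β * (linRegret Θ N f θ + N * Ehat)) := by
        gcongr; exact (sum_sq_norm_fderiv_le_of_isCSN hβ.le hCSN θ).trans (by gcongr)
      _ = R ^ 2 / ηstar + ηstar * β * (linRegret Θ N f θ + N * Ehat) := by ring
  rw [mul_assoc β] at hη
  rw [mul_assoc (8 * β * R ^ 2)]
  exact le_add_sqrt_of_le_div_add_mul (by positivity) hβ hR hη hchain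

/-- Lemma D.3: bias-dependent bound for the regret to the linear functions defined by
the gradients, with the tuned constant stepsize. -/
theorem bias_dependent_linearized_regret
    {E : Type*} [NormedAddCommGroup E] [NormedSpace ℝ E]
    (Θ : Set E) (hne : Θ.Nonempty) (hcl : IsClosed Θ) (hcv : Convex ℝ Θ)
    (N : ℕ) (hN : 1 ≤ N)
    (f : ℕ → E → ℝ) (β : ℝ) (hβ : 0 < β)
    (hCSN : ∀ n ∈ Finset.Icc 1 N, IsCSN (f n) β)
    (θ : ℕ → E) (hθ : ∀ n ∈ Finset.Icc 1 N, θ n ∈ Θ)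
    (εhat Ehat R ηstar : ℝ)
    (hεhat : εhat = (1 / (N : ℝ)) * sInf ((fun x => ∑ n ∈ Finset.Icc 1 N, f n x) '' Θ))
    (hEhat : εhat ≤ Ehat)
    (hR : 0 < R)
    (hη : ηstar = 1 / (2 * (β + Real.sqrt (β ^ 2 + β * N * Ehat / (2 * R ^ 2)))))
    (hreg1 : regret Θ N f θ ≤ linRegret Θ N f θ)
    (hreg2 : linRegret Θ N f θ ≤ R ^ 2 / ηstar
        + (ηstar / 2) * ∑ n ∈ Finset.Icc 1 N, ‖fderiv ℝ (f n) (θ n)‖ ^ 2) :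
    linRegret Θ N f θ ≤ 8 * β * R ^ 2 + Real.sqrt (8 * β * R ^ 2 * N * Ehat) :=
  bias_dependent_linearized_regret_general Θ N hN f β hβ hCSN θ εhat Ehat R ηstar hεhat hEhat hR hη
    hreg1 hreg2
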